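/- Let A₁A₂B₂B₁ be an ultraparallel trapezoid with A₁ ideal (decorated by a horocycle), A₂ ∈ ℍ², and angle π/2 at A₂. With signed lengths r₁ = |A₁B₁|, r₂ = |A₂B₂|, l₁₂ = |A₁A₂| (measured to the horocycle at A₁), and a₁₂ = |B₁B₂|, we have e^{r₁} = sinh(r₂)·e^{l₁₂} and tanh(a₁₂) = 1/cosh(r₂). -/

import Mathlib

/-!
Write `l₁ = c • (B₁ + m)`; pairing with `B₁` gives `c = e^{r₁}`. The point `A₂` is orthogonal to the
tangent `T = sinh r₂ • B₂ + cosh r₂ • m` of the lateral edge, so the right angle at `A₂` says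
`⟨l₁, T⟩ = 0`, i.e. `cosh r₂ = sinh r₂ · cosh a₁₂`. Both formulas follow from this relation by
hyperbolic trigonometry: `cosh r₂ cosh a₁₂ - sinh r₂ = 1 / sinh r₂` gives `e^{l₁₂} = e^{r₁} / sinh r₂`,
and `sinh a₁₂ = 1 / sinh r₂` gives `tanh a₁₂ = 1 / cosh r₂`.
-/

/-- The Minkowski bilinear form on `ℝ^{1,2}`. -/
def mink (x y : Fin 3 → ℝ) : ℝ := -(x 0 * y 0) + x 1 * y 1 + x 2 * y 2

open Real

namespace Real

variable {r a : ℝ}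

theorem sinh_pos_of_cosh_eq_sinh_mul_cosh (h : cosh r = sinh r * cosh a) : 0 < sinh r :=
  pos_of_mul_pos_left (h ▸ cosh_pos r) (cosh_pos a).le

theorem cosh_mul_cosh_sub_sinh_of_cosh_eq_sinh_mul_cosh (h : cosh r = sinh r * cosh a) :
    cosh r * cosh a - sinh r = 1 / sinh r := by
  have hs := (sinh_pos_of_cosh_eq_sinh_mul_cosh h).ne'
  field_simp
  linear_combination -cosh r * h + cosh_sq r

theorem sinh_eq_inv_sinh_of_cosh_eq_sinh_mul_cosh (ha : 0 ≤ a) (h : cosh r = sinh r * cosh a) :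
    sinh a = 1 / sinh r := by
  have hs := sinh_pos_of_cosh_eq_sinh_mul_cosh h
  rw [← pow_left_inj₀ (sinh_nonneg_iff.mpr ha) (by positivity) two_ne_zero]
  field_simp
  linear_combination (sinh r ^ 2) * sinh_sq a - (cosh r + sinh r * cosh a) * h + cosh_sq r

theorem tanh_eq_inv_cosh_of_cosh_eq_sinh_mul_cosh (ha : 0 ≤ a) (h : cosh r = sinh r * cosh a) :
    tanh a = 1 / cosh r := by
  have hs := (sinh_pos_of_cosh_eq_sinh_mul_cosh h).ne'
  rw [tanh_eq_sinh_div_cosh, sinh_eq_inv_sinh_of_cosh_eq_sinh_mul_cosh ha h, h]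
  field_simp

end Real

section Minkowski

@[simp] lemma mink_add_left (x y z : Fin 3 → ℝ) : mink (x + y) z = mink x z + mink y z := by
  simp only [mink, Pi.add_apply]; ring

@[simp] lemma mink_add_right (x y z : Fin 3 → ℝ) : mink x (y + z) = mink x y + mink x z := by
  simp only [mink, Pi.add_apply]; ring

@[simp] lemma mink_smul_left (c : ℝ) (x y : Fin 3 → ℝ) : mink (c • x) y = c * mink x y := by
  simp only [mink, Pi.smul_apply, smul_eq_mul]; ring

@[simp] lemma mink_smul_right (c : ℝ) (x y : Fin 3 → ℝ) : mink x (c • y) = c * mink x y := by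
  simp only [mink, Pi.smul_apply, smul_eq_mul]; ring

lemma mink_comm (x y : Fin 3 → ℝ) : mink x y = mink y x := by
  simp only [mink]; ring

variable {m B B' : Fin 3 → ℝ} (r : ℝ)

lemma mink_cosh_smul_add_sinh_smul_sinh_smul_add_cosh_smul (hm : mink m m = 1)
    (hB : mink B B = -1) (hBm : mink B m = 0) :
    mink (cosh r • B + sinh r • m) (sinh r • B + cosh r • m) = 0 := by
  simp only [mink_add_left, mink_add_right, mink_smul_left, mink_smul_right, hm, hB, hBm,
    mink_comm m B]
  ring

lemma mink_add_cosh_smul_add_sinh_smul (hm : mink m m = 1) (hBm : mink B m = 0)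
    (hB'm : mink B' m = 0) :
    mink (B + m) (cosh r • B' + sinh r • m) = sinh r + cosh r * mink B B' := by
  simp only [mink_add_left, mink_add_right, mink_smul_right, hm, hBm, mink_comm m B', hB'm]
  ring

lemma mink_add_sinh_smul_add_cosh_smul (hm : mink m m = 1) (hBm : mink B m = 0)
    (hB'm : mink B' m = 0) :
    mink (B + m) (sinh r • B' + cosh r • m) = cosh r + sinh r * mink B B' := by
  simp only [mink_add_left, mink_add_right, mink_smul_right, hm, hBm, mink_comm m B', hB'm]
  ring

end Minkowski

/-- `m` is the unit normal of the lower line through `B₁, B₂`, and `l₁` is the light-like polar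
vector of the horocycle decorating `A₁`, so that signed lengths to `A₁` are read off as
`⟨X, l₁⟩ = -e^{d(X, horocycle)}`; the angle condition says that the tangent at `A₂` toward `A₁`
is orthogonal to the tangent of the lateral edge `A₂B₂`. -/
theorem lambert_trapezoid_ideal_vertex_general
    (m B₁ B₂ l₁ : Fin 3 → ℝ) (r₁ r₂ l₁₂ a₁₂ : ℝ)
    (hm : mink m m = 1)
    (hB₁ : mink B₁ B₁ = -1) (hB₁m : mink B₁ m = 0)
    (hB₂ : mink B₂ B₂ = -1) (hB₂m : mink B₂ m = 0)
    (hproj : ∃ c : ℝ, 0 < c ∧ l₁ = c • (B₁ + m))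
    (A₂ : Fin 3 → ℝ)
    (hA₂ : A₂ = Real.cosh r₂ • B₂ + Real.sinh r₂ • m)
    (hr₁ : mink B₁ l₁ = -Real.exp r₁)
    (hl₁₂ : mink A₂ l₁ = -Real.exp l₁₂)
    (ha : 0 ≤ a₁₂) (halen : Real.cosh a₁₂ = -(mink B₁ B₂))
    (hangle : mink (l₁ + (mink l₁ A₂) • A₂) (Real.sinh r₂ • B₂ + Real.cosh r₂ • m) = 0) :
    Real.exp r₁ = Real.sinh r₂ * Real.exp l₁₂ ∧
    Real.tanh a₁₂ = 1 / Real.cosh r₂ := by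
  obtain ⟨c, hc, rfl⟩ := hproj
  have hB₁B₂ : mink B₁ B₂ = -cosh a₁₂ := by linarith
  have hc_eq : c = exp r₁ := by
    simp only [mink_smul_right, mink_add_right, hB₁, hB₁m] at hr₁
    linarith
  have hkey : cosh r₂ = sinh r₂ * cosh a₁₂ := by
    rw [mink_add_left, mink_smul_left (mink _ A₂), hA₂,
      mink_cosh_smul_add_sinh_smul_sinh_smul_add_cosh_smul r₂ hm hB₂ hB₂m, mul_zero, add_zero,
      mink_smul_left, mink_add_sinh_smul_add_cosh_smul r₂ hm hB₁m hB₂m, hB₁B₂] at hangle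
    linarith [(mul_eq_zero.mp hangle).resolve_left hc.ne']
  refine ⟨?_, tanh_eq_inv_cosh_of_cosh_eq_sinh_mul_cosh ha hkey⟩
  have hexp : exp l₁₂ = c / sinh r₂ := by
    rw [mink_comm, hA₂, mink_smul_left, mink_add_cosh_smul_add_sinh_smul r₂ hm hB₁m hB₂m,
      hB₁B₂] at hl₁₂
    linear_combination hl₁₂ + c * cosh_mul_cosh_sub_sinh_of_cosh_eq_sinh_mul_cosh hkey
  rw [hexp, hc_eq, mul_div_cancel₀ _ (sinh_pos_of_cosh_eq_sinh_mul_cosh hkey).ne']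

/-- Lambert quadrilateral formulas for an ultraparallel trapezoid with one ideal vertex.
`m` is a unit space-like normal to the lower line, `B₁, B₂` lie on the lower line, the upper
vertex `A₁` is the ideal point with future light-like polar vector `l₁` of its decorating
horocycle, projecting orthogonally to `B₁` (i.e. `l₁` is a positive multiple of `B₁ + m`),
and `A₂ = cosh r₂ • B₂ + sinh r₂ • m` with `r₂ > 0`.  The signed lengths are measured to the
horocycle: `⟨B₁, l₁⟩ = -e^{r₁}`, `⟨A₂, l₁⟩ = -e^{l₁₂}`; the angle of the trapezoid at `A₂` is
`π/2` (the tangent toward the ideal point `A₁` is orthogonal to the lateral-edge tangent).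
Then `e^{r₁} = sinh r₂ · e^{l₁₂}` and `tanh a₁₂ = 1 / cosh r₂`. -/
theorem lambert_trapezoid_ideal_vertex
    (m B₁ B₂ l₁ : Fin 3 → ℝ) (r₁ r₂ l₁₂ a₁₂ : ℝ)
    (hm : mink m m = 1)
    (hB₁ : mink B₁ B₁ = -1) (hB₁0 : 0 < B₁ 0) (hB₁m : mink B₁ m = 0)
    (hB₂ : mink B₂ B₂ = -1) (hB₂0 : 0 < B₂ 0) (hB₂m : mink B₂ m = 0)
    (hl₁ : mink l₁ l₁ = 0) (hl₁0 : 0 < l₁ 0)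
    (hproj : ∃ c : ℝ, 0 < c ∧ l₁ = c • (B₁ + m))
    (hr₂ : 0 < r₂)
    (A₂ : Fin 3 → ℝ)
    (hA₂ : A₂ = Real.cosh r₂ • B₂ + Real.sinh r₂ • m)
    (hr₁ : mink B₁ l₁ = -Real.exp r₁)
    (hl₁₂ : mink A₂ l₁ = -Real.exp l₁₂)
    (ha : 0 ≤ a₁₂) (halen : Real.cosh a₁₂ = -(mink B₁ B₂))
    (hangle : mink (l₁ + (mink l₁ A₂) • A₂) (Real.sinh r₂ • B₂ + Real.cosh r₂ • m) = 0) :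
    Real.exp r₁ = Real.sinh r₂ * Real.exp l₁₂ ∧
    Real.tanh a₁₂ = 1 / Real.cosh r₂ :=
  lambert_trapezoid_ideal_vertex_general m B₁ B₂ l₁ r₁ r₂ l₁₂ a₁₂ hm hB₁ hB₁m hB₂ hB₂m hproj A₂ hA₂
    hr₁ hl₁₂ ha halen hangle
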